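/- Fix t, T > 0 and let B be a fractional Brownian motion with Hurst parameter 1/6, t_k = k/n, Delta B_k = B(t_k)-B(t_{k-1}). Then sup over s in [0,T] of the sum over k from 1 to floor(nt) of |E[B(s) Delta B_k]| is bounded uniformly in n, i.e., equals O(1) as n -> infinity. -/
import Mathlib


open Real MeasureTheory

noncomputable def Fcube (z : ℝ) : ℝ :=
  (max z 0) ^ ((1:ℝ)/3) - (max (-z) 0) ^ ((1:ℝ)/3)

lemma Fcube_of_nonneg {z : ℝ} (hz : 0 ≤ z) : Fcube z = z ^ ((1:ℝ)/3) := by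
  unfold Fcube
  rw [max_eq_left hz, max_eq_right (neg_nonpos.mpr hz), Real.zero_rpow (by norm_num), sub_zero]

lemma Fcube_of_nonpos {z : ℝ} (hz : z ≤ 0) : Fcube z = -((-z) ^ ((1:ℝ)/3)) := by
  unfold Fcube
  rw [max_eq_right hz, max_eq_left (neg_nonneg.mpr hz), Real.zero_rpow (by norm_num), zero_sub]

lemma key_ineq {x y : ℝ} (h : y ≤ x) :
    abs (|x| ^ ((1:ℝ)/3) - |y| ^ ((1:ℝ)/3)) ≤ Fcube x - Fcube y := by
  rcases le_or_gt 0 y with hy | hy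
  · have hx : 0 ≤ x := hy.trans h
    rw [abs_of_nonneg hx, abs_of_nonneg hy, Fcube_of_nonneg hx, Fcube_of_nonneg hy,
      abs_of_nonneg (sub_nonneg.mpr (Real.rpow_le_rpow hy h (by norm_num)))]
  · rcases le_or_gt x 0 with hx | hx
    · rw [abs_of_nonpos hx, abs_of_nonpos hy.le, Fcube_of_nonpos hx, Fcube_of_nonpos hy.le,
        abs_sub_comm,
        abs_of_nonneg (sub_nonneg.mpr
          (Real.rpow_le_rpow (neg_nonneg.mpr hx) (neg_le_neg h) (by norm_num)))]
      linarith
    · rw [abs_of_pos hx, abs_of_neg hy, Fcube_of_nonneg hx.le, Fcube_of_nonpos hy.le]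
      have h1 : 0 ≤ x ^ ((1:ℝ)/3) := Real.rpow_nonneg hx.le _
      have h2 : 0 ≤ (-y) ^ ((1:ℝ)/3) := Real.rpow_nonneg (by linarith) _
      rw [abs_sub_le_iff]
      constructor <;> linarith

lemma telescope (g : ℕ → ℝ) (m : ℕ) :
    ∑ k ∈ Finset.Icc 1 m, (g k - g (k-1)) = g m - g 0 := by
  induction m with
  | zero => simp
  | succ m ih =>
      rw [Finset.sum_Icc_succ_top (Nat.succ_le_succ (Nat.zero_le m)), ih]
      simp

theorem stmt_19 {Ω : Type*} [MeasurableSpace Ω] (P : Measure Ω) [IsProbabilityMeasure P]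
    (B : ℝ → Ω → ℝ)
    (hcov : ∀ s t : ℝ, 0 ≤ s → 0 ≤ t →
      ∫ ω, B s ω * B t ω ∂P
        = (1/2) * (t ^ ((1:ℝ)/3) + s ^ ((1:ℝ)/3) - |t - s| ^ ((1:ℝ)/3)))
    (hint : ∀ s t : ℝ, Integrable (fun ω => B s ω * B t ω) P)
    (t T : ℝ) (ht : 0 < t) (hT : 0 < T) :
    ∃ C : ℝ, 0 < C ∧ ∀ n : ℕ, 1 ≤ n → ∀ s : ℝ, 0 ≤ s → s ≤ T →
      ∑ k ∈ Finset.Icc 1 (Nat.floor ((n:ℝ) * t)),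
          |∫ ω, B s ω * (B ((k:ℝ)/n) ω - B (((k:ℝ) - 1)/n) ω) ∂P|
        ≤ C := by
  have hCt : 0 ≤ t ^ ((1:ℝ)/3) := Real.rpow_nonneg ht.le _
  have hCT : 0 ≤ T ^ ((1:ℝ)/3) := Real.rpow_nonneg hT.le _
  refine ⟨t ^ ((1:ℝ)/3) + T ^ ((1:ℝ)/3) + 1, by linarith, ?_⟩
  intro n hn s hs hsT
  have hn0 : (0:ℝ) < n := by exact_mod_cast hn
  set m := Nat.floor ((n:ℝ) * t) with hm
  set g : ℕ → ℝ := fun k =>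
    (1/2) * (((k:ℝ)/n) ^ ((1:ℝ)/3) + Fcube ((k:ℝ)/n - s)) with hg
  have hterm : ∀ k ∈ Finset.Icc 1 m,
      |∫ ω, B s ω * (B ((k:ℝ)/n) ω - B (((k:ℝ) - 1)/n) ω) ∂P| ≤ g k - g (k-1) := by
    intro k hk
    have hk1 : 1 ≤ k := (Finset.mem_Icc.mp hk).1
    have hk1' : (1:ℝ) ≤ (k:ℝ) := by exact_mod_cast hk1
    have hkcast : ((k - 1 : ℕ) : ℝ) = (k:ℝ) - 1 := by push_cast [hk1]; ring
    set a : ℝ := (k:ℝ)/n with ha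
    set b : ℝ := ((k:ℝ) - 1)/n with hb
    have hb0 : 0 ≤ b := div_nonneg (by linarith) hn0.le
    have ha0 : 0 ≤ a := div_nonneg (by linarith) hn0.le
    have hba : b ≤ a := by
      rw [ha, hb]
      gcongr
      linarith
    have e1 : ∫ ω, B s ω * (B a ω - B b ω) ∂P
        = (∫ ω, B s ω * B a ω ∂P) - ∫ ω, B s ω * B b ω ∂P := by
      rw [← integral_sub (hint s a) (hint s b)]
      congr 1; funext ω; ring
    rw [e1, hcov s a hs ha0, hcov s b hs hb0]
    have hgk : g k = (1/2) * (a ^ ((1:ℝ)/3) + Fcube (a - s)) := rfl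
    have hgk1 : g (k-1) = (1/2) * (b ^ ((1:ℝ)/3) + Fcube (b - s)) := by
      simp only [hg, hkcast, hb]
    rw [hgk, hgk1]
    have hmono : b ^ ((1:ℝ)/3) ≤ a ^ ((1:ℝ)/3) := Real.rpow_le_rpow hb0 hba (by norm_num)
    have hkey := key_ineq (show b - s ≤ a - s by linarith)
    have habs : ∀ x : ℝ, |x - s| = |x - s| := fun _ => rfl
    have habssub : |(|a - s| ^ ((1:ℝ)/3)) - (|b - s| ^ ((1:ℝ)/3))|
        ≤ Fcube (a - s) - Fcube (b - s) := hkey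
    have e2 : (1/2) * (a ^ ((1:ℝ)/3) + s ^ ((1:ℝ)/3) - |a - s| ^ ((1:ℝ)/3))
        - (1/2) * (b ^ ((1:ℝ)/3) + s ^ ((1:ℝ)/3) - |b - s| ^ ((1:ℝ)/3))
        = (1/2) * ((a ^ ((1:ℝ)/3) - b ^ ((1:ℝ)/3))
            - ((|a - s| ^ ((1:ℝ)/3)) - (|b - s| ^ ((1:ℝ)/3)))) := by ring
    rw [e2, abs_mul, abs_of_nonneg (by norm_num : (0:ℝ) ≤ 1/2)]
    have h3 : |(a ^ ((1:ℝ)/3) - b ^ ((1:ℝ)/3))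
            - ((|a - s| ^ ((1:ℝ)/3)) - (|b - s| ^ ((1:ℝ)/3)))|
        ≤ |a ^ ((1:ℝ)/3) - b ^ ((1:ℝ)/3)|
          + |(|a - s| ^ ((1:ℝ)/3)) - (|b - s| ^ ((1:ℝ)/3))| := by
      rw [sub_eq_add_neg]
      exact (abs_add_le _ _).trans (by rw [abs_neg])
    rw [abs_of_nonneg (sub_nonneg.mpr hmono)] at h3
    nlinarith [habssub, h3]
  calc ∑ k ∈ Finset.Icc 1 m,
        |∫ ω, B s ω * (B ((k:ℝ)/n) ω - B (((k:ℝ) - 1)/n) ω) ∂P|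
      ≤ ∑ k ∈ Finset.Icc 1 m, (g k - g (k-1)) := Finset.sum_le_sum hterm
    _ = g m - g 0 := telescope g m
    _ ≤ t ^ ((1:ℝ)/3) + T ^ ((1:ℝ)/3) + 1 := by
        have hg0 : g 0 = -(1/2) * s ^ ((1:ℝ)/3) := by
          simp only [hg, Nat.cast_zero, zero_div, zero_sub,
            Real.zero_rpow (by norm_num : (1:ℝ)/3 ≠ 0),
            Fcube_of_nonpos (neg_nonpos.mpr hs), neg_neg]
          ring
        have hmn : ((m:ℝ))/n ≤ t := by
          rw [div_le_iff₀ hn0]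
          calc (m:ℝ) ≤ (n:ℝ) * t := Nat.floor_le (by positivity)
            _ = t * n := by ring
        have hmn0 : 0 ≤ ((m:ℝ))/n := div_nonneg (Nat.cast_nonneg _) hn0.le
        have h1 : ((m:ℝ)/n) ^ ((1:ℝ)/3) ≤ t ^ ((1:ℝ)/3) :=
          Real.rpow_le_rpow hmn0 hmn (by norm_num)
        have h2 : Fcube ((m:ℝ)/n - s) ≤ t ^ ((1:ℝ)/3) := by
          rcases le_or_gt ((m:ℝ)/n - s) 0 with h | h
          · rw [Fcube_of_nonpos h]
            have := Real.rpow_nonneg (neg_nonneg.mpr h) ((1:ℝ)/3)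
            linarith
          · rw [Fcube_of_nonneg h.le]
            exact Real.rpow_le_rpow h.le (by linarith) (by norm_num)
        have h3 : s ^ ((1:ℝ)/3) ≤ T ^ ((1:ℝ)/3) :=
          Real.rpow_le_rpow hs hsT (by norm_num)
        have hgm : g m = (1/2) * (((m:ℝ)/n) ^ ((1:ℝ)/3) + Fcube ((m:ℝ)/n - s)) := rfl
        rw [hgm, hg0]
        nlinarith
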